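/- Let m ≡ 7 (mod 8) with m ≥ 7, n = 2^m − 1, and v = 2^{(m+1)/2} − 1. Then gcd(v, n) = 1, and for every integer a with 1 ≤ a ≤ 2^{(m−1)/2} + 2, the binary weight of (a·v mod n) is congruent to 0 or 1 modulo 4. -/

import Mathlib

def w2 (x : ℕ) : ℕ := (Nat.digits 2 x).sum

/-!
Write `m = 2j + 1` and `A = 2^j`, so that `v = 2A - 1`, `n = 2A² - 1` and `j + 1 ≡ 0 (mod 4)`.
Coprimality is `gcd(2^(j+1) - 1, 2^(2j+1) - 1) = 2^gcd(j+1, 2j+1) - 1 = 1`.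
For `1 ≤ a ≤ A` no reduction happens, and `a(2^(j+1) - 1) = (2^(j+1) - a) + 2^(j+1)(a - 1)`
has weight exactly `j + 1`, because `2^(j+1) - a` and `a - 1` are complementary `(j+1)`-bit
strings. The two remaining values reduce to `(A + 1)v ≡ A` and `(A + 2)v ≡ 3A - 1 (mod n)`,
of weights `1` and `j + 1`.
-/

lemma w2_eq_mod_two_add_w2_div_two (x : ℕ) : w2 x = x % 2 + w2 (x / 2) := by
  rcases Nat.eq_zero_or_pos x with rfl | hx
  · simp [w2]
  · rw [w2, Nat.digits_def' one_lt_two hx, List.sum_cons]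
    rfl

lemma w2_add_two_pow_mul {k x : ℕ} (y : ℕ) (hx : x < 2 ^ k) :
    w2 (x + 2 ^ k * y) = w2 x + w2 y := by
  induction k generalizing x with
  | zero =>
    obtain rfl : x = 0 := by omega
    simp [w2]
  | succ k ih =>
    rw [pow_succ'] at hx ⊢
    have hy : 2 * 2 ^ k * y = 2 * (2 ^ k * y) := mul_assoc ..
    have hdiv : (x + 2 * 2 ^ k * y) / 2 = x / 2 + 2 ^ k * y := by omega
    have hmod : (x + 2 * 2 ^ k * y) % 2 = x % 2 := by omega
    rw [w2_eq_mod_two_add_w2_div_two (x + _), w2_eq_mod_two_add_w2_div_two x, hdiv, hmod,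
      ih (by omega)]
    omega

lemma w2_add_w2_two_pow_sub_one_sub {k x : ℕ} (hx : x < 2 ^ k) :
    w2 x + w2 (2 ^ k - 1 - x) = k := by
  induction k generalizing x with
  | zero =>
    obtain rfl : x = 0 := by omega
    simp [w2]
  | succ k ih =>
    have hdiv : (2 ^ (k + 1) - 1 - x) / 2 = 2 ^ k - 1 - x / 2 := by rw [pow_succ]; omega
    have hmod : (2 ^ (k + 1) - 1 - x) % 2 = 1 - x % 2 := by rw [pow_succ] at hx ⊢; omega
    have hhalf := @ih (x / 2) (by rw [pow_succ] at hx; omega)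
    rw [w2_eq_mod_two_add_w2_div_two x, w2_eq_mod_two_add_w2_div_two (2 ^ (k + 1) - 1 - x),
      hdiv, hmod]
    omega

lemma w2_mul_two_pow_sub_one {k a : ℕ} (ha : 1 ≤ a) (hak : a ≤ 2 ^ k) :
    w2 (a * (2 ^ k - 1)) = k := by
  have hsplit : a * (2 ^ k - 1) = (2 ^ k - 1 - (a - 1)) + 2 ^ k * (a - 1) := by
    zify [Nat.one_le_two_pow, ha, hak, show a - 1 ≤ 2 ^ k - 1 by omega]
    ring
  rw [hsplit, w2_add_two_pow_mul _ (by omega), add_comm,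
    w2_add_w2_two_pow_sub_one_sub (by omega)]

lemma w2_two_pow (k : ℕ) : w2 (2 ^ k) = 1 := by
  rw [w2, ← mul_one (2 ^ k), Nat.digits_base_pow_mul one_lt_two one_pos]
  simp

lemma w2_two_pow_sub_one (k : ℕ) : w2 (2 ^ k - 1) = k := by
  simpa using w2_mul_two_pow_sub_one (k := k) le_rfl Nat.one_le_two_pow

section

variable {j : ℕ}

lemma w2_mul_mod_of_le (hj : 1 ≤ j) {a : ℕ} (ha : 1 ≤ a) (haj : a ≤ 2 ^ j) :
    w2 (a * (2 ^ (j + 1) - 1) % (2 ^ (2 * j + 1) - 1)) = j + 1 := by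
  have hA : 2 ≤ 2 ^ j := Nat.le_self_pow (by omega) 2
  have hlt : a * (2 ^ (j + 1) - 1) < 2 ^ (2 * j + 1) - 1 := by
    calc a * (2 ^ (j + 1) - 1) ≤ 2 ^ j * (2 ^ (j + 1) - 1) := Nat.mul_le_mul_right _ haj
      _ < 2 ^ (2 * j + 1) - 1 := by
        rw [pow_succ', two_mul j, pow_succ', pow_add]
        generalize 2 ^ j = A at hA ⊢
        zify [show 1 ≤ 2 * A by omega, show 1 ≤ 2 * (A * A) by nlinarith]
        nlinarith
  rw [Nat.mod_eq_of_lt hlt, w2_mul_two_pow_sub_one ha (by rw [pow_succ]; omega)]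

lemma w2_two_pow_add_one_mul_mod (hj : 1 ≤ j) :
    w2 ((2 ^ j + 1) * (2 ^ (j + 1) - 1) % (2 ^ (2 * j + 1) - 1)) = 1 := by
  have hA : 2 ≤ 2 ^ j := Nat.le_self_pow (by omega) 2
  suffices h : (2 ^ j + 1) * (2 ^ (j + 1) - 1) = (2 ^ (2 * j + 1) - 1) + 2 ^ j ∧
      2 ^ j < 2 ^ (2 * j + 1) - 1 by
    rw [h.1, Nat.add_mod_left, Nat.mod_eq_of_lt h.2, w2_two_pow]
  rw [pow_succ', two_mul j, pow_succ', pow_add]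
  generalize 2 ^ j = A at hA ⊢
  zify [show 1 ≤ 2 * A by omega, show 1 ≤ 2 * (A * A) by nlinarith]
  constructor <;> nlinarith

lemma w2_two_pow_add_two_mul_mod (hj : 1 ≤ j) :
    w2 ((2 ^ j + 2) * (2 ^ (j + 1) - 1) % (2 ^ (2 * j + 1) - 1)) = j + 1 := by
  have hA : 2 ≤ 2 ^ j := Nat.le_self_pow (by omega) 2
  suffices h : (2 ^ j + 2) * (2 ^ (j + 1) - 1)
      = (2 ^ (2 * j + 1) - 1) + ((2 ^ j - 1) + 2 ^ j * 2) ∧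
      (2 ^ j - 1) + 2 ^ j * 2 < 2 ^ (2 * j + 1) - 1 by
    rw [h.1, Nat.add_mod_left, Nat.mod_eq_of_lt h.2, w2_add_two_pow_mul _ (by omega),
      w2_two_pow_sub_one, ← pow_one 2, w2_two_pow]
  rw [pow_succ', two_mul j, pow_succ', pow_add]
  generalize 2 ^ j = A at hA ⊢
  zify [show 1 ≤ A by omega, show 1 ≤ 2 * A by omega, show 1 ≤ 2 * (A * A) by nlinarith]
  constructor <;> nlinarith

end

theorem stmt18_general (m : ℕ) (hm : m % 8 = 7)
    (n v : ℕ) (hn : n = 2 ^ m - 1) (hv : v = 2 ^ ((m + 1) / 2) - 1) :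
    Nat.gcd v n = 1 ∧
    ∀ a : ℕ, 1 ≤ a → a ≤ 2 ^ ((m - 1) / 2) + 2 →
      w2 (a * v % n) % 4 = 0 ∨ w2 (a * v % n) % 4 = 1 := by
  obtain ⟨j, rfl, hj4⟩ : ∃ j, m = 2 * j + 1 ∧ (j + 1) % 4 = 0 := ⟨m / 2, by omega, by omega⟩
  have hj : 1 ≤ j := by omega
  rw [show (2 * j + 1 + 1) / 2 = j + 1 by omega] at hv
  rw [show (2 * j + 1 - 1) / 2 = j by omega]
  subst hn hv
  refine ⟨?_, fun a ha1 ha => ?_⟩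
  · have hcop : Nat.gcd (j + 1) (2 * j + 1) = 1 := by
      rw [show 2 * j + 1 = j + (j + 1) by ring, Nat.gcd_add_self_right]
      simp
    rw [Nat.pow_sub_one_gcd_pow_sub_one, hcop, pow_one]
  · obtain hle | rfl | rfl : a ≤ 2 ^ j ∨ a = 2 ^ j + 1 ∨ a = 2 ^ j + 2 := by omega
    · rw [w2_mul_mod_of_le hj ha1 hle]; omega
    · rw [w2_two_pow_add_one_mul_mod hj]; omega
    · rw [w2_two_pow_add_two_mul_mod hj]; omega

theorem stmt18 (m : ℕ) (hm : m % 8 = 7) (hm7 : 7 ≤ m)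
    (n v : ℕ) (hn : n = 2 ^ m - 1) (hv : v = 2 ^ ((m + 1) / 2) - 1) :
    Nat.gcd v n = 1 ∧
    ∀ a : ℕ, 1 ≤ a → a ≤ 2 ^ ((m - 1) / 2) + 2 →
      w2 (a * v % n) % 4 = 0 ∨ w2 (a * v % n) % 4 = 1 :=
  stmt18_general m hm n v hn hv
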